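/- For every real λ with 0 < λ < 2 there exists κ > 0 such that ∑_{n ≤ x} λ^{Ω(⌊x/n⌋)} = x·∑_{n=1}^∞ λ^{Ω(n)}/(n(n+1)) + O(x^{1−κ}) as x → ∞; in particular the series ∑_{n=1}^∞ λ^{Ω(n)}/(n(n+1)) converges. -/

import Mathlib

/-!
Write `f(m) = λ^Ω(m)`. Since `2^Ω(m) ≤ m`, we have `|f(m)| ≤ m^α` with `α = log₂ max(1, λ) < 1`,
and the argument uses nothing else about `f`. The number of `n ≤ x` with `⌊x/n⌋ = m` is
`⌊x/m⌋ - ⌊x/(m+1)⌋ = x/(m(m+1)) + O(1)`. Split the `n ≤ x` according to whether `⌊x/n⌋ ≤ √x`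
(Dirichlet's hyperbola method): those contribute `x ∑_{m ≤ √x} f(m)/(m(m+1)) + O(x^((1+α)/2))`,
the remaining `n < √x` contribute `∑ (x/n)^α = O(x^((1+α)/2))`, and the tail
`x ∑_{m > √x} f(m)/(m(m+1))` of the series is `O(x^((3+α)/4))`.
-/

open Finset Real ArithmeticFunction

theorem two_pow_cardFactors_le {m : ℕ} (hm : m ≠ 0) : 2 ^ cardFactors m ≤ m := by
  rw [cardFactors_apply]
  calc 2 ^ m.primeFactorsList.length ≤ m.primeFactorsList.prod :=
        List.pow_card_le_prod _ _ fun p hp => (Nat.prime_of_mem_primeFactorsList hp).two_le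
    _ = m := Nat.prod_primeFactorsList hm

theorem pow_cardFactors_le_rpow {lam : ℝ} (hlam : 0 ≤ lam) {m : ℕ} (hm : m ≠ 0) :
    lam ^ cardFactors m ≤ (m : ℝ) ^ logb 2 (max 1 lam) := by
  have hmax : 0 < max 1 lam := lt_max_of_lt_left one_pos
  calc lam ^ cardFactors m ≤ max 1 lam ^ cardFactors m :=
        pow_le_pow_left₀ hlam (le_max_right _ _) _
    _ = ((2 : ℝ) ^ cardFactors m) ^ logb 2 (max 1 lam) := by
        rw [← rpow_natCast, ← rpow_natCast, ← rpow_mul zero_le_two, mul_comm, rpow_mul zero_le_two,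
          rpow_logb two_pos (by norm_num) hmax]
    _ ≤ (m : ℝ) ^ logb 2 (max 1 lam) :=
        rpow_le_rpow (by positivity) (by exact_mod_cast two_pow_cardFactors_le hm)
          (logb_nonneg one_lt_two (le_max_left _ _))

theorem logb_two_max_one_lt_one {lam : ℝ} (hlam : lam < 2) : logb 2 (max 1 lam) < 1 := by
  rw [logb_lt_iff_lt_rpow one_lt_two (lt_max_of_lt_left one_pos), rpow_one]
  exact max_lt one_lt_two hlam

theorem Nat.div_eq_iff_div_succ_lt_and_le_div {N n m : ℕ} (hn : 0 < n) (hm : 0 < m) :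
    N / n = m ↔ N / (m + 1) < n ∧ n ≤ N / m := by
  rw [Nat.div_lt_iff_lt_mul (Nat.succ_pos m), Nat.le_div_iff_mul_le hm, mul_comm, mul_comm n,
    ← Nat.div_lt_iff_lt_mul hn, ← Nat.le_div_iff_mul_le hn]
  omega

theorem sum_Ioc_div_eq_sum_Icc (f : ℕ → ℝ) (N M : ℕ) :
    ∑ n ∈ Ioc (N / (M + 1)) N, f (N / n) =
      ∑ m ∈ Icc 1 M, ((N / m - N / (m + 1) : ℕ) : ℝ) * f m := by
  have hmaps : ∀ n ∈ Ioc (N / (M + 1)) N, N / n ∈ Icc 1 M := by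
    intro n hn
    obtain ⟨hKn, hnN⟩ := mem_Ioc.1 hn
    have hn0 : 0 < n := Nat.zero_lt_of_lt hKn
    refine mem_Icc.2 ⟨Nat.div_pos hnN hn0, Nat.lt_succ_iff.1 ?_⟩
    rw [Nat.div_lt_iff_lt_mul hn0, mul_comm, ← Nat.div_lt_iff_lt_mul (Nat.succ_pos M)]
    exact hKn
  rw [← sum_fiberwise_of_maps_to' hmaps]
  refine sum_congr rfl fun m hm => ?_
  obtain ⟨hm1, hmM⟩ := mem_Icc.1 hm
  have hfiber : {n ∈ Ioc (N / (M + 1)) N | N / n = m} = Ioc (N / (m + 1)) (N / m) := by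
    ext n
    simp only [mem_filter, mem_Ioc]
    have hMm : N / (M + 1) ≤ N / (m + 1) := Nat.div_le_div_left (by omega) (Nat.succ_pos m)
    constructor
    · rintro ⟨⟨h1, _⟩, h⟩
      exact (Nat.div_eq_iff_div_succ_lt_and_le_div (Nat.zero_lt_of_lt h1) hm1).1 h
    · rintro ⟨h1, h2⟩
      exact ⟨⟨hMm.trans_lt h1, h2.trans (Nat.div_le_self N m)⟩,
        (Nat.div_eq_iff_div_succ_lt_and_le_div (Nat.zero_lt_of_lt h1) hm1).2 ⟨h1, h2⟩⟩
  rw [hfiber, sum_const, Nat.card_Ioc, nsmul_eq_mul]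

theorem abs_div_sub_div_sub_le_one (N : ℕ) {m : ℕ} (hm : 0 < m) :
    |((N / m - N / (m + 1) : ℕ) : ℝ) - N / (m * (m + 1))| ≤ 1 := by
  rw [Nat.cast_sub (Nat.div_le_div_left (Nat.le_succ m) hm), ← Nat.floor_div_eq_div (K := ℝ),
    ← Nat.floor_div_eq_div (K := ℝ), Nat.cast_succ]
  have h1 := Nat.floor_le (by positivity : (0 : ℝ) ≤ N / m)
  have h2 := Nat.lt_floor_add_one ((N : ℝ) / m)
  have h3 := Nat.floor_le (by positivity : (0 : ℝ) ≤ N / (m + 1))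
  have h4 := Nat.lt_floor_add_one ((N : ℝ) / (m + 1))
  have hsplit : (N : ℝ) / (m * (m + 1)) = N / m - N / (m + 1) := by field_simp; ring
  rw [hsplit, abs_le]
  constructor <;> linarith

theorem rpow_add_mul_rpow_sub_one_le {p : ℝ} (hp0 : 0 ≤ p) (hp1 : p ≤ 1) {t : ℝ} (ht : 0 ≤ t) :
    t ^ p + p * (t + 1) ^ (p - 1) ≤ (t + 1) ^ p := by
  have ht1 : 0 < t + 1 := by linarith
  have hbern := rpow_one_add_le_one_add_mul_self (s := -1 / (t + 1))
    (by rw [neg_div, neg_le_neg_iff, div_le_one ht1]; linarith) hp0 hp1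
  rw [show 1 + -1 / (t + 1) = t / (t + 1) by field_simp; ring, div_rpow ht ht1.le,
    div_le_iff₀ (rpow_pos_of_pos ht1 p)] at hbern
  have hexpand : (1 + p * (-1 / (t + 1))) * (t + 1) ^ p =
      (t + 1) ^ p - p * ((t + 1) ^ p / (t + 1)) := by
    ring
  rw [rpow_sub_one ht1.ne']
  linarith

theorem sum_Icc_rpow_sub_one_le {p : ℝ} (hp0 : 0 < p) (hp1 : p ≤ 1) (K : ℕ) :
    ∑ n ∈ Icc 1 K, (n : ℝ) ^ (p - 1) ≤ (K : ℝ) ^ p / p := by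
  induction K with
  | zero => simp [zero_rpow hp0.ne']
  | succ K ih =>
    rw [sum_Icc_succ_top (Nat.le_add_left 1 K), Nat.cast_succ]
    have hstep := div_le_div_of_nonneg_right
      (rpow_add_mul_rpow_sub_one_le hp0.le hp1 (Nat.cast_nonneg K)) hp0.le
    rw [add_div, mul_div_cancel_left₀ _ hp0.ne'] at hstep
    linarith

theorem Nat.rpow_sqrt_le (N : ℕ) {c : ℝ} (hc : 0 ≤ c) : (N.sqrt : ℝ) ^ c ≤ (N : ℝ) ^ (c / 2) := by
  calc (N.sqrt : ℝ) ^ c = ((N.sqrt : ℝ) ^ 2) ^ (c / 2) := by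
        rw [← rpow_natCast, ← rpow_mul (Nat.cast_nonneg _)]; ring_nf
    _ ≤ (N : ℝ) ^ (c / 2) :=
        rpow_le_rpow (by positivity) (by exact_mod_cast N.sqrt_le') (by linarith)

theorem Nat.rpow_sqrt_add_one_le {N : ℕ} (hN : 0 < N) {c : ℝ} (hc : c ≤ 0) :
    ((N.sqrt : ℝ) + 1) ^ c ≤ (N : ℝ) ^ (c / 2) := by
  calc ((N.sqrt : ℝ) + 1) ^ c = (((N.sqrt : ℝ) + 1) ^ 2) ^ (c / 2) := by
        rw [← rpow_natCast, ← rpow_mul (by positivity)]; ring_nf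
    _ ≤ (N : ℝ) ^ (c / 2) :=
        rpow_le_rpow_of_nonpos (by exact_mod_cast hN) (by exact_mod_cast (N.lt_succ_sqrt').le)
          (by linarith)

/-- The term `f m / (m (m + 1))` of the limiting series, at `m = n + 1`; the weight
`x / (m (m + 1))` approximates the number of `n ≤ x` with `⌊x / n⌋ = m`. -/
noncomputable def meanTerm (f : ℕ → ℝ) (n : ℕ) : ℝ :=
  f (n + 1) / (((n : ℝ) + 1) * ((n : ℝ) + 2))

section

variable {f : ℕ → ℝ} {α : ℝ}

theorem abs_meanTerm_le (hf : ∀ m ≠ 0, |f m| ≤ (m : ℝ) ^ α) (n : ℕ) :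
    |meanTerm f n| ≤ ((n : ℝ) + 1) ^ (α - 2) := by
  have hn : (0 : ℝ) < n + 1 := by positivity
  have hnum : |f (n + 1)| ≤ ((n : ℝ) + 1) ^ α := by exact_mod_cast hf (n + 1) n.succ_ne_zero
  rw [meanTerm, abs_div, abs_of_pos (by positivity : (0 : ℝ) < (n + 1) * (n + 2)), rpow_sub hn,
    rpow_two]
  exact div_le_div₀ (by positivity) hnum (by positivity) (by nlinarith)

theorem summable_add_one_rpow {c : ℝ} (hc : c < -1) : Summable fun n : ℕ => ((n : ℝ) + 1) ^ c := by
  simpa using (summable_nat_add_iff 1).2 (summable_nat_rpow.2 hc)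

theorem summable_meanTerm (hf : ∀ m ≠ 0, |f m| ≤ (m : ℝ) ^ α) (hα : α < 1) :
    Summable (meanTerm f) :=
  (summable_add_one_rpow (by linarith)).of_norm_bounded (abs_meanTerm_le hf)

theorem abs_tsum_meanTerm_add_le (hf : ∀ m ≠ 0, |f m| ≤ (m : ℝ) ^ α) (hα : α < 1) (M : ℕ) :
    |∑' n, meanTerm f (n + M)| ≤
      (∑' n : ℕ, ((n : ℝ) + 1) ^ ((α - 3) / 2)) * ((M : ℝ) + 1) ^ ((α - 1) / 2) := by
  rw [← Real.norm_eq_abs]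
  refine tsum_of_norm_bounded
    ((summable_add_one_rpow (c := (α - 3) / 2) (by linarith)).hasSum.mul_right _) fun n => ?_
  have hnM : (0 : ℝ) < n + M + 1 := by positivity
  -- split the decay `(n + M + 1) ^ (α - 2)` between the index `n` and the cut-off `M`
  calc ‖meanTerm f (n + M)‖ ≤ ((n : ℝ) + M + 1) ^ (α - 2) := by
        simpa using abs_meanTerm_le hf (n + M)
    _ = ((n : ℝ) + M + 1) ^ ((α - 3) / 2) * ((n : ℝ) + M + 1) ^ ((α - 1) / 2) := by
        rw [← rpow_add hnM]; ring_nf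
    _ ≤ ((n : ℝ) + 1) ^ ((α - 3) / 2) * ((M : ℝ) + 1) ^ ((α - 1) / 2) := by
        gcongr ?_ * ?_
        · exact rpow_le_rpow_of_nonpos (by positivity) (by linarith [M.cast_nonneg (α := ℝ)])
            (by linarith)
        · exact rpow_le_rpow_of_nonpos (by positivity) (by linarith [n.cast_nonneg (α := ℝ)])
            (by linarith)

theorem abs_sum_Icc_div_le (hα0 : 0 ≤ α) (hα1 : α < 1) (hf : ∀ m ≠ 0, |f m| ≤ (m : ℝ) ^ α)
    {N K : ℕ} (hKN : K ≤ N) :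
    |∑ n ∈ Icc 1 K, f (N / n)| ≤ (N : ℝ) ^ α * ((K : ℝ) ^ (1 - α) / (1 - α)) := by
  calc |∑ n ∈ Icc 1 K, f (N / n)| ≤ ∑ n ∈ Icc 1 K, (N : ℝ) ^ α * (n : ℝ) ^ ((1 - α) - 1) := by
        refine (abs_sum_le_sum_abs _ _).trans (sum_le_sum fun n hn => ?_)
        obtain ⟨hn1, hnK⟩ := mem_Icc.1 hn
        calc |f (N / n)| ≤ ((N / n : ℕ) : ℝ) ^ α :=
              hf _ (Nat.div_pos (hnK.trans hKN) hn1).ne'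
          _ ≤ ((N : ℝ) / n) ^ α := rpow_le_rpow (Nat.cast_nonneg _) Nat.cast_div_le hα0
          _ = (N : ℝ) ^ α * (n : ℝ) ^ ((1 - α) - 1) := by
              rw [div_rpow (Nat.cast_nonneg _) (Nat.cast_nonneg _), sub_sub_cancel_left,
                rpow_neg (Nat.cast_nonneg _), div_eq_mul_inv]
    _ = (N : ℝ) ^ α * ∑ n ∈ Icc 1 K, (n : ℝ) ^ ((1 - α) - 1) := (mul_sum _ _ _).symm
    _ ≤ (N : ℝ) ^ α * ((K : ℝ) ^ (1 - α) / (1 - α)) :=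
        mul_le_mul_of_nonneg_left (sum_Icc_rpow_sub_one_le (by linarith) (by linarith) K)
          (by positivity)

theorem abs_hyperbola_error_le (hα0 : 0 ≤ α) (hf : ∀ m ≠ 0, |f m| ≤ (m : ℝ) ^ α) (N M : ℕ) :
    |∑ m ∈ Icc 1 M, (((N / m - N / (m + 1) : ℕ) : ℝ) - N / (m * (m + 1))) * f m| ≤
      (M : ℝ) ^ (1 + α) := by
  calc |∑ m ∈ Icc 1 M, (((N / m - N / (m + 1) : ℕ) : ℝ) - N / (m * (m + 1))) * f m|
      ≤ ∑ m ∈ Icc 1 M, (M : ℝ) ^ α := by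
        refine (abs_sum_le_sum_abs _ _).trans (sum_le_sum fun m hm => ?_)
        obtain ⟨hm1, hmM⟩ := mem_Icc.1 hm
        rw [abs_mul, ← one_mul ((M : ℝ) ^ α)]
        exact mul_le_mul (abs_div_sub_div_sub_le_one N hm1) ((hf m (by omega)).trans
          (rpow_le_rpow (Nat.cast_nonneg _) (Nat.cast_le.2 hmM) hα0)) (abs_nonneg _) zero_le_one
    _ = (M : ℝ) ^ (1 + α) := by
        rw [sum_const, Nat.card_Icc, add_tsub_cancel_right, nsmul_eq_mul,
          rpow_add' (Nat.cast_nonneg _) (by linarith), rpow_one]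

theorem sum_Icc_div_sub_mul_tsum_eq (hs : Summable (meanTerm f)) (N M : ℕ) :
    ∑ n ∈ Icc 1 N, f (N / n) - N * ∑' n, meanTerm f n =
      ∑ n ∈ Icc 1 (N / (M + 1)), f (N / n) +
        ∑ m ∈ Icc 1 M, (((N / m - N / (m + 1) : ℕ) : ℝ) - N / (m * (m + 1))) * f m -
        N * ∑' n, meanTerm f (n + M) := by
  have hsplit : ∑ n ∈ Icc 1 N, f (N / n) =
      ∑ n ∈ Icc 1 (N / (M + 1)), f (N / n) + ∑ n ∈ Ioc (N / (M + 1)) N, f (N / n) := by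
    have := sum_Ioc_consecutive (fun n => f (N / n)) (Nat.zero_le _) (Nat.div_le_self N (M + 1))
    rwa [← Icc_add_one_left_eq_Ioc 0, ← Icc_add_one_left_eq_Ioc 0, zero_add, eq_comm] at this
  have hpartial : ∑ n ∈ range M, meanTerm f n = ∑ m ∈ Icc 1 M, f m / (m * (m + 1)) := by
    rw [← Ico_add_one_right_eq_Icc, sum_Ico_eq_sum_range, add_tsub_cancel_right]
    refine sum_congr rfl fun n _ => ?_
    rw [meanTerm, add_comm 1 n]
    push_cast
    ring_nf
  have hmiddle : ∑ m ∈ Icc 1 M, (((N / m - N / (m + 1) : ℕ) : ℝ) - N / (m * (m + 1))) * f m =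
      ∑ m ∈ Icc 1 M, ((N / m - N / (m + 1) : ℕ) : ℝ) * f m -
        N * ∑ m ∈ Icc 1 M, f m / (m * (m + 1)) := by
    rw [mul_sum, ← sum_sub_distrib]
    exact sum_congr rfl fun m _ => by ring
  rw [hsplit, sum_Ioc_div_eq_sum_Icc, ← hs.sum_add_tsum_nat_add M, hpartial, hmiddle]
  ring

theorem exists_abs_sum_Icc_div_sub_mul_tsum_le (hα0 : 0 ≤ α) (hα1 : α < 1)
    (hf : ∀ m ≠ 0, |f m| ≤ (m : ℝ) ^ α) :
    ∃ C, 0 < C ∧ ∀ N : ℕ,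
      |∑ n ∈ Icc 1 N, f (N / n) - N * ∑' n, meanTerm f n| ≤ C * (N : ℝ) ^ ((3 + α) / 4) := by
  set C₃ := ∑' n : ℕ, ((n : ℝ) + 1) ^ ((α - 3) / 2)
  have hC₃ : 0 ≤ C₃ := tsum_nonneg fun n => by positivity
  have hα : 0 < 1 - α := by linarith
  refine ⟨1 / (1 - α) + 1 + C₃, by positivity, fun N => ?_⟩
  rcases N.eq_zero_or_pos with rfl | hN
  · simp [zero_rpow (by linarith : (3 + α) / 4 ≠ 0)]
  set M := N.sqrt
  have hKM : N / (M + 1) ≤ M :=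
    Nat.lt_succ_iff.1 ((Nat.div_lt_iff_lt_mul M.succ_pos).2 N.lt_succ_sqrt)
  have hN1 : (1 : ℝ) ≤ N := Nat.one_le_cast.2 hN
  have hmono : (N : ℝ) ^ ((1 + α) / 2) ≤ (N : ℝ) ^ ((3 + α) / 4) :=
    rpow_le_rpow_of_exponent_le hN1 (by linarith)
  have hhead : |∑ n ∈ Icc 1 (N / (M + 1)), f (N / n)| ≤ (N : ℝ) ^ ((3 + α) / 4) / (1 - α) :=
    calc |∑ n ∈ Icc 1 (N / (M + 1)), f (N / n)|
        ≤ (N : ℝ) ^ α * (((N / (M + 1) : ℕ) : ℝ) ^ (1 - α) / (1 - α)) :=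
          abs_sum_Icc_div_le hα0 hα1 hf (Nat.div_le_self _ _)
      _ ≤ (N : ℝ) ^ α * ((N : ℝ) ^ ((1 - α) / 2) / (1 - α)) := by
          gcongr
          exact (rpow_le_rpow (Nat.cast_nonneg _) (Nat.cast_le.2 hKM) hα.le).trans
            (N.rpow_sqrt_le hα.le)
      _ = (N : ℝ) ^ ((1 + α) / 2) / (1 - α) := by
          rw [mul_div_assoc', ← rpow_add (by positivity)]
          ring_nf
      _ ≤ (N : ℝ) ^ ((3 + α) / 4) / (1 - α) := by gcongr
  have hmiddle : |∑ m ∈ Icc 1 M, (((N / m - N / (m + 1) : ℕ) : ℝ) - N / (m * (m + 1))) * f m| ≤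
      (N : ℝ) ^ ((3 + α) / 4) :=
    (abs_hyperbola_error_le hα0 hf N M).trans ((N.rpow_sqrt_le (by linarith)).trans hmono)
  have htail : |N * ∑' n, meanTerm f (n + M)| ≤ C₃ * (N : ℝ) ^ ((3 + α) / 4) :=
    calc |N * ∑' n, meanTerm f (n + M)| ≤ N * (C₃ * ((M : ℝ) + 1) ^ ((α - 1) / 2)) := by
          rw [abs_mul, Nat.abs_cast]
          exact mul_le_mul_of_nonneg_left (abs_tsum_meanTerm_add_le hf hα1 M) (Nat.cast_nonneg _)
      _ ≤ N * (C₃ * (N : ℝ) ^ ((α - 1) / 2 / 2)) := by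
          gcongr
          exact N.rpow_sqrt_add_one_le hN (by linarith)
      _ = C₃ * (N : ℝ) ^ ((3 + α) / 4) := by
          rw [mul_left_comm, ← rpow_one_add' (Nat.cast_nonneg _) (by linarith)]
          ring_nf
  rw [sum_Icc_div_sub_mul_tsum_eq (summable_meanTerm hf hα1) N M]
  calc _ ≤ _ := (abs_sub _ _).trans (add_le_add_left (abs_add_le _ _) _)
    _ ≤ (N : ℝ) ^ ((3 + α) / 4) / (1 - α) + (N : ℝ) ^ ((3 + α) / 4) +
        C₃ * (N : ℝ) ^ ((3 + α) / 4) := by linarith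
    _ = (1 / (1 - α) + 1 + C₃) * (N : ℝ) ^ ((3 + α) / 4) := by ring

theorem exists_abs_sum_Icc_floor_div_sub_mul_tsum_le (hα0 : 0 ≤ α) (hα1 : α < 1)
    (hf : ∀ m ≠ 0, |f m| ≤ (m : ℝ) ^ α) :
    ∃ C, 0 < C ∧ ∀ x : ℝ, 1 ≤ x →
      |∑ n ∈ Icc 1 ⌊x⌋₊, f ⌊x / n⌋₊ - x * ∑' n, meanTerm f n| ≤ C * x ^ ((3 + α) / 4) := by
  obtain ⟨C, hC, hbound⟩ := exists_abs_sum_Icc_div_sub_mul_tsum_le hα0 hα1 hf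
  set S := ∑' n, meanTerm f n
  refine ⟨C + |S|, by positivity, fun x hx => ?_⟩
  simp only [Nat.floor_div_natCast]
  set N := ⌊x⌋₊
  have hNx : (N : ℝ) ≤ x := Nat.floor_le (by linarith)
  have hxN : |x - N| ≤ 1 := by
    rw [abs_of_nonneg (by linarith)]
    linarith [Nat.lt_floor_add_one x]
  have hpow : 1 ≤ x ^ ((3 + α) / 4) := one_le_rpow hx (by linarith)
  calc |∑ n ∈ Icc 1 N, f (N / n) - x * S|
      = |(∑ n ∈ Icc 1 N, f (N / n) - N * S) - (x - N) * S| := by ring_nf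
    _ ≤ |∑ n ∈ Icc 1 N, f (N / n) - N * S| + |x - N| * |S| := by
        rw [← abs_mul]; exact abs_sub _ _
    _ ≤ C * x ^ ((3 + α) / 4) + 1 * |S| := by
        gcongr
        exact (hbound N).trans (by gcongr)
    _ ≤ (C + |S|) * x ^ ((3 + α) / 4) := by nlinarith [abs_nonneg S]

end

theorem sum_lambda_pow_Omega_floor_div (lam : ℝ) (hlam0 : 0 < lam) (hlam2 : lam < 2) :
    Summable (fun n : ℕ =>
      lam ^ (cardFactors (n + 1)) / (((n : ℝ) + 1) * ((n : ℝ) + 2))) ∧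
    ∃ κ : ℝ, 0 < κ ∧ ∃ C : ℝ, 0 < C ∧ ∃ x₀ : ℝ, ∀ x : ℝ, x₀ ≤ x →
      |(∑ n ∈ Finset.Icc 1 ⌊x⌋₊, lam ^ (cardFactors ⌊x / (n : ℝ)⌋₊)) -
          x * ∑' n : ℕ,
            lam ^ (cardFactors (n + 1)) / (((n : ℝ) + 1) * ((n : ℝ) + 2))| ≤
        C * x ^ (1 - κ) := by
  set α := logb 2 (max 1 lam)
  have hα0 : 0 ≤ α := logb_nonneg one_lt_two (le_max_left _ _)
  have hα1 : α < 1 := logb_two_max_one_lt_one hlam2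
  have hf : ∀ m ≠ 0, |lam ^ cardFactors m| ≤ (m : ℝ) ^ α := fun m hm => by
    rw [abs_of_pos (pow_pos hlam0 _)]
    exact pow_cardFactors_le_rpow hlam0.le hm
  obtain ⟨C, hC, hbound⟩ := exists_abs_sum_Icc_floor_div_sub_mul_tsum_le hα0 hα1 hf
  have hsum := summable_meanTerm hf hα1
  refine ⟨hsum, (1 - α) / 4, by linarith, C, hC, 1, fun x hx => ?_⟩
  rw [show 1 - (1 - α) / 4 = (3 + α) / 4 by ring]
  exact hbound x hx
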